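/- Let D(λ) = trace(K⁻¹Φ(b,λ)) for K ∈ SL(2,ℝ), where Φ is the fundamental matrix of the distributional Sturm–Liouville system. A number λ ∈ ℂ is an eigenvalue of the coupled self-adjoint problem Y(b) = e^{iγ}K Y(a) (γ ∈ (−π,0)∪(0,π)) if and only if D(λ) = 2cos γ; and λ is an eigenvalue of Y(b) = K Y(a) if and only if D(λ) = 2. -/

import Mathlib

/-!
Solutions of the system are absolutely continuous, so the Wronskian `u v¹ - v u¹` of two
solutions has zero derivative almost everywhere and is therefore constant. For `φ₁, φ₂` this gives
`det Φ(b) = 1`; for a solution `y` paired with `φ₁` and with `φ₂` it gives, by Cramer's rule,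
`Y(x) = Φ(x) Y(a)`. Hence `Y(b) = μ K Y(a)` has a nontrivial solution iff
`det (Φ(b) - μ K) = 0`, and expanding this determinant with `det Φ(b) = det K = 1` gives
`μ² - μ D + 1 = 0`, i.e. `D = μ + μ⁻¹`, which is `2 cos γ` for `μ = e^{iγ}`.
-/

open MeasureTheory intervalIntegral Set Real

/-- A complex (Carathéodory) solution of the distributional Sturm–Liouville system
`y′ = (1/p)·y¹ − s·y`, `(y¹)′ = s·y¹ + (q − λr)·y` on `[a,b]`, in integral form. -/
def SLCSolution (a b : ℝ) (lam : ℂ) (p q r s : ℝ → ℝ) (y y1 : ℝ → ℂ) : Prop :=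
  ContinuousOn y (Set.Icc a b) ∧ ContinuousOn y1 (Set.Icc a b) ∧
  ∀ x ∈ Set.Icc a b,
    y x = y a + ∫ t in a..x, ((1 / p t : ℝ) * y1 t - (s t : ℝ) * y t) ∧
    y1 x = y1 a + ∫ t in a..x, ((s t : ℝ) * y1 t + ((q t : ℝ) - lam * (r t : ℝ)) * y t)

open Filter Topology

namespace AbsolutelyContinuousOnInterval

theorem congr {X : Type*} [PseudoMetricSpace X] {f g : ℝ → X} {a b : ℝ}
    (hf : AbsolutelyContinuousOnInterval f a b) (hfg : EqOn f g (uIcc a b)) :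
    AbsolutelyContinuousOnInterval g a b := by
  refine hf.congr' (eventually_inf_principal.mpr (.of_forall fun E hE ↦ ?_))
  exact Finset.sum_congr rfl fun i hi ↦ by rw [hfg (hE.1 i hi).1, hfg (hE.1 i hi).2]

theorem const {X : Type*} [PseudoMetricSpace X] (c : X) (a b : ℝ) :
    AbsolutelyContinuousOnInterval (fun _ ↦ c) a b :=
  (LipschitzWith.const c).lipschitzOnWith.absolutelyContinuousOnInterval

theorem ofReal {f : ℝ → ℝ} {a b : ℝ} (hf : AbsolutelyContinuousOnInterval f a b) :
    AbsolutelyContinuousOnInterval (fun x ↦ (f x : ℂ)) a b := by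
  simpa only [AbsolutelyContinuousOnInterval, Complex.isometry_ofReal.dist_eq] using hf

end AbsolutelyContinuousOnInterval

theorem IntervalIntegrable.ofReal {f : ℝ → ℝ} {a b : ℝ} {μ : Measure ℝ}
    (h : IntervalIntegrable f μ a b) : IntervalIntegrable (fun x ↦ (f x : ℂ)) μ a b :=
  ⟨h.1.ofReal, h.2.ofReal⟩

theorem IntervalIntegrable.absolutelyContinuousOnInterval_intervalIntegral_complex
    {f : ℝ → ℂ} {a b c : ℝ} (h : IntervalIntegrable f volume a b) (hc : c ∈ uIcc a b) :
    AbsolutelyContinuousOnInterval (fun x ↦ ∫ v in c..x, f v) a b := by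
  have hre : IntervalIntegrable (fun x ↦ (f x).re) volume a b := ⟨h.1.re, h.2.re⟩
  have him : IntervalIntegrable (fun x ↦ (f x).im) volume a b := ⟨h.1.im, h.2.im⟩
  refine ((hre.absolutelyContinuousOnInterval_intervalIntegral hc).ofReal.add
    ((him.absolutelyContinuousOnInterval_intervalIntegral hc).ofReal.const_smul Complex.I)).congr
    fun x hx ↦ ?_
  have hcx : IntervalIntegrable f volume c x := h.mono_set (uIcc_subset_uIcc hc hx)
  have hre_comm := Complex.reCLM.intervalIntegral_comp_comm hcx
  have him_comm := Complex.imCLM.intervalIntegral_comp_comm hcx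
  simp only [Complex.reCLM_apply, Complex.imCLM_apply] at hre_comm him_comm
  simp only [Pi.add_apply, smul_eq_mul, hre_comm, him_comm, mul_comm Complex.I, Complex.re_add_im]

theorem uIcc_mem_nhds_of_ne {a b x : ℝ} (hx : x ∈ uIcc a b) (ha : x ≠ a) (hb : x ≠ b) :
    uIcc a b ∈ 𝓝 x := by
  have hmin : min a b ≠ x := by rcases min_choice a b with h | h <;> rw [h] <;> tauto
  have hmax : max a b ≠ x := by rcases max_choice a b with h | h <;> rw [h] <;> tauto
  exact Icc_mem_nhds (hx.1.lt_of_ne hmin) (hx.2.lt_of_ne' hmax)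

theorem HasDerivAt.of_eqOn_primitive {f F : ℝ → ℂ} {a b x : ℝ}
    (hF : EqOn F (fun x ↦ F a + ∫ t in a..x, f t) (uIcc a b)) (hx : uIcc a b ∈ 𝓝 x)
    (hfx : HasDerivAt (fun x ↦ ∫ t in a..x, f t) (f x) x) : HasDerivAt F (f x) x :=
  (hfx.const_add (F a)).congr_of_eventuallyEq (eventually_of_mem hx hF)

theorem integral_mul_add_mul_eq_sub_of_eqOn_primitive {f g F G : ℝ → ℂ} {a b : ℝ}
    (hf : IntervalIntegrable f volume a b) (hg : IntervalIntegrable g volume a b)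
    (hF : EqOn F (fun x ↦ F a + ∫ t in a..x, f t) (uIcc a b))
    (hG : EqOn G (fun x ↦ G a + ∫ t in a..x, g t) (uIcc a b)) :
    ∫ x in a..b, f x * G x + F x * g x = F b * G b - F a * G a := by
  have ha : a ∈ uIcc a b := left_mem_uIcc
  have hFac : AbsolutelyContinuousOnInterval F a b :=
    ((AbsolutelyContinuousOnInterval.const _ a b).add
      (hf.absolutelyContinuousOnInterval_intervalIntegral_complex ha)).congr hF.symm
  have hGac : AbsolutelyContinuousOnInterval G a b :=
    ((AbsolutelyContinuousOnInterval.const _ a b).add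
      (hg.absolutelyContinuousOnInterval_intervalIntegral_complex ha)).congr hG.symm
  have hh : IntervalIntegrable (fun x ↦ f x * G x + F x * g x) volume a b :=
    (hf.mul_continuousOn hGac.continuousOn).add (hg.continuousOn_mul hFac.continuousOn)
  obtain ⟨C, hC⟩ := ((hFac.fun_smul hGac).sub
      (hh.absolutelyContinuousOnInterval_intervalIntegral_complex ha)).const_of_ae_hasDerivAt_zero
    (by
      filter_upwards [hf.ae_hasDerivAt_integral, hg.ae_hasDerivAt_integral,
        hh.ae_hasDerivAt_integral, (toFinite {a, b}).countable.ae_notMem volume]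
        with x hfx hgx hhx hxab hx
      have hxo : uIcc a b ∈ 𝓝 x := uIcc_mem_nhds_of_ne hx (by grind) (by grind)
      have hd := (((hfx hx a ha).of_eqOn_primitive hF hxo).mul
        ((hgx hx a ha).of_eqOn_primitive hG hxo)).sub (hhx hx a ha)
      rwa [sub_self] at hd)
  have hCa := hC a ha
  have hCb := hC b right_mem_uIcc
  simp only [Pi.sub_apply, smul_eq_mul, integral_same, sub_zero] at hCa hCb
  linear_combination hCa - hCb

theorem eqOn_primitive_linear_combination {f g F G : ℝ → ℂ} {a b : ℝ}
    (hf : IntervalIntegrable f volume a b) (hg : IntervalIntegrable g volume a b)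
    (hF : EqOn F (fun x ↦ F a + ∫ t in a..x, f t) (Icc a b))
    (hG : EqOn G (fun x ↦ G a + ∫ t in a..x, g t) (Icc a b)) (c d : ℂ) :
    EqOn (fun x ↦ c * F x + d * G x)
      (fun x ↦ (c * F a + d * G a) + ∫ t in a..x, (c * f t + d * g t)) (Icc a b) := by
  intro x hx
  have hax : uIcc a x ⊆ uIcc a b := uIcc_subset_uIcc left_mem_uIcc (Icc_subset_uIcc hx)
  dsimp only
  rw [integral_add ((hf.mono_set hax).const_mul c) ((hg.mono_set hax).const_mul d),
    intervalIntegral.integral_const_mul, intervalIntegral.integral_const_mul, hF hx, hG hx]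
  ring

namespace SLCSolution

variable {a b : ℝ} {lam : ℂ} {p q r s : ℝ → ℝ} {y y1 : ℝ → ℂ}

theorem intervalIntegrable_integrands (hy : SLCSolution a b lam p q r s y y1) (hab : a ≤ b)
    (hp : IntervalIntegrable (fun x ↦ 1 / p x) volume a b) (hq : IntervalIntegrable q volume a b)
    (hr : IntervalIntegrable r volume a b) (hs : IntervalIntegrable s volume a b) :
    IntervalIntegrable (fun t ↦ ((1 / p t : ℝ) : ℂ) * y1 t - (s t : ℂ) * y t) volume a b ∧
    IntervalIntegrable (fun t ↦ (s t : ℂ) * y1 t + ((q t : ℂ) - lam * (r t : ℂ)) * y t)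
      volume a b := by
  obtain ⟨hyc, hy1c, -⟩ := hy
  rw [← uIcc_of_le hab] at hyc hy1c
  exact ⟨(hp.ofReal.mul_continuousOn hy1c).sub (hs.ofReal.mul_continuousOn hyc),
    (hs.ofReal.mul_continuousOn hy1c).add
      ((hq.ofReal.sub (hr.ofReal.const_mul lam)).mul_continuousOn hyc)⟩

theorem linear_combination {z z1 : ℝ → ℂ} (hy : SLCSolution a b lam p q r s y y1)
    (hz : SLCSolution a b lam p q r s z z1) (hab : a ≤ b)
    (hp : IntervalIntegrable (fun x ↦ 1 / p x) volume a b) (hq : IntervalIntegrable q volume a b)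
    (hr : IntervalIntegrable r volume a b) (hs : IntervalIntegrable s volume a b) (c d : ℂ) :
    SLCSolution a b lam p q r s (fun x ↦ c * y x + d * z x) (fun x ↦ c * y1 x + d * z1 x) := by
  obtain ⟨hyf, hyg⟩ := hy.intervalIntegrable_integrands hab hp hq hr hs
  obtain ⟨hzf, hzg⟩ := hz.intervalIntegrable_integrands hab hp hq hr hs
  refine ⟨(hy.1.const_smul c).add (hz.1.const_smul d),
    (hy.2.1.const_smul c).add (hz.2.1.const_smul d), fun x hx ↦ ⟨?_, ?_⟩⟩
  · convert eqOn_primitive_linear_combination hyf hzf (fun x hx ↦ (hy.2.2 x hx).1)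
      (fun x hx ↦ (hz.2.2 x hx).1) c d hx using 3
    funext t
    ring
  · convert eqOn_primitive_linear_combination hyg hzg (fun x hx ↦ (hy.2.2 x hx).2)
      (fun x hx ↦ (hz.2.2 x hx).2) c d hx using 3
    funext t
    ring

theorem wronskian_eq {u u1 v v1 : ℝ → ℂ} (hu : SLCSolution a b lam p q r s u u1)
    (hv : SLCSolution a b lam p q r s v v1) (hab : a ≤ b)
    (hp : IntervalIntegrable (fun x ↦ 1 / p x) volume a b) (hq : IntervalIntegrable q volume a b)
    (hr : IntervalIntegrable r volume a b) (hs : IntervalIntegrable s volume a b)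
    {x : ℝ} (hx : x ∈ Icc a b) :
    u x * v1 x - v x * u1 x = u a * v1 a - v a * u1 a := by
  obtain ⟨huf, hug⟩ := hu.intervalIntegrable_integrands hab hp hq hr hs
  obtain ⟨hvf, hvg⟩ := hv.intervalIntegrable_integrands hab hp hq hr hs
  have hax : uIcc a x ⊆ uIcc a b := uIcc_subset_uIcc left_mem_uIcc (Icc_subset_uIcc hx)
  have hIcc : uIcc a x ⊆ Icc a b := by
    rw [uIcc_of_le hx.1]; exact Icc_subset_Icc_right hx.2
  have huv1 := integral_mul_add_mul_eq_sub_of_eqOn_primitive (huf.mono_set hax)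
    (hvg.mono_set hax) (fun t ht ↦ (hu.2.2 t (hIcc ht)).1) (fun t ht ↦ (hv.2.2 t (hIcc ht)).2)
  have hvu1 := integral_mul_add_mul_eq_sub_of_eqOn_primitive (hvf.mono_set hax)
    (hug.mono_set hax) (fun t ht ↦ (hv.2.2 t (hIcc ht)).1) (fun t ht ↦ (hu.2.2 t (hIcc ht)).2)
  rw [integral_congr (g := fun t ↦ ((1 / p t : ℝ) * v1 t - (s t : ℝ) * v t) * u1 t +
    v t * ((s t : ℝ) * u1 t + ((q t : ℝ) - lam * (r t : ℝ)) * u t)) fun t _ ↦ by ring] at huv1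
  linear_combination hvu1 - huv1

theorem eq_fundamental_combination {φ₁ φ₁' φ₂ φ₂' : ℝ → ℂ}
    (hy : SLCSolution a b lam p q r s y y1)
    (h₁ : SLCSolution a b lam p q r s φ₁ φ₁') (h₂ : SLCSolution a b lam p q r s φ₂ φ₂')
    (hinit : φ₁ a = 1 ∧ φ₁' a = 0 ∧ φ₂ a = 0 ∧ φ₂' a = 1) (hab : a ≤ b)
    (hp : IntervalIntegrable (fun x ↦ 1 / p x) volume a b) (hq : IntervalIntegrable q volume a b)
    (hr : IntervalIntegrable r volume a b) (hs : IntervalIntegrable s volume a b)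
    {x : ℝ} (hx : x ∈ Icc a b) :
    y x = y a * φ₁ x + y1 a * φ₂ x ∧ y1 x = y a * φ₁' x + y1 a * φ₂' x := by
  obtain ⟨h₁a, h₁'a, h₂a, h₂'a⟩ := hinit
  have w₁₂ := h₁.wronskian_eq h₂ hab hp hq hr hs hx
  have w₁ := h₁.wronskian_eq hy hab hp hq hr hs hx
  have w₂ := h₂.wronskian_eq hy hab hp hq hr hs hx
  rw [h₁a, h₁'a, h₂a, h₂'a] at *
  constructor
  · linear_combination (-y x) * w₁₂ + φ₂ x * w₁ - φ₁ x * w₂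
  · linear_combination (-y1 x) * w₁₂ + φ₂' x * w₁ - φ₁' x * w₂

end SLCSolution

open scoped Matrix in
theorem Matrix.mulVec_fin_two_eq_zero_iff {R : Type*} [NonUnitalNonAssocSemiring R]
    {m₀₀ m₀₁ m₁₀ m₁₁ x y : R} :
    !![m₀₀, m₀₁; m₁₀, m₁₁] *ᵥ ![x, y] = 0 ↔ m₀₀ * x + m₀₁ * y = 0 ∧ m₁₀ * x + m₁₁ * y = 0 := by
  simp [dotProduct, funext_iff, Fin.forall_fin_two]

section BoundaryValueProblem

variable {a b : ℝ} {lam : ℂ} {p q r s : ℝ → ℝ} {φ₁ φ₁' φ₂ φ₂' : ℝ → ℂ}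

theorem exists_solution_coupled_iff_det_eq_zero
    (h₁ : SLCSolution a b lam p q r s φ₁ φ₁') (h₂ : SLCSolution a b lam p q r s φ₂ φ₂')
    (hinit : φ₁ a = 1 ∧ φ₁' a = 0 ∧ φ₂ a = 0 ∧ φ₂' a = 1) (hab : a ≤ b)
    (hp : IntervalIntegrable (fun x ↦ 1 / p x) volume a b) (hq : IntervalIntegrable q volume a b)
    (hr : IntervalIntegrable r volume a b) (hs : IntervalIntegrable s volume a b)
    (μ k₁₁ k₁₂ k₂₁ k₂₂ : ℂ) :
    (∃ y y1 : ℝ → ℂ, SLCSolution a b lam p q r s y y1 ∧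
        (∃ x ∈ Icc a b, y x ≠ 0 ∨ y1 x ≠ 0) ∧
        y b = μ * (k₁₁ * y a + k₁₂ * y1 a) ∧ y1 b = μ * (k₂₁ * y a + k₂₂ * y1 a)) ↔
      !![φ₁ b - μ * k₁₁, φ₂ b - μ * k₁₂; φ₁' b - μ * k₂₁, φ₂' b - μ * k₂₂].det = 0 := by
  rw [← Matrix.exists_mulVec_eq_zero_iff]
  constructor
  · rintro ⟨y, y1, hy, ⟨x, hx, hyx⟩, hyb, hy1b⟩
    obtain ⟨hyb', hy1b'⟩ :=
      hy.eq_fundamental_combination h₁ h₂ hinit hab hp hq hr hs (right_mem_Icc.2 hab)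
    refine ⟨![y a, y1 a], fun h0 ↦ ?_, Matrix.mulVec_fin_two_eq_zero_iff.2
      ⟨by linear_combination hyb - hyb', by linear_combination hy1b - hy1b'⟩⟩
    have hya : y a = 0 := congrFun h0 0
    have hy1a : y1 a = 0 := congrFun h0 1
    have hyx' := hy.eq_fundamental_combination h₁ h₂ hinit hab hp hq hr hs hx
    simp only [hya, hy1a, zero_mul, add_zero] at hyx'
    tauto
  · rintro ⟨v, hv, hMv⟩
    obtain ⟨c₁, c₂, rfl⟩ : ∃ c₁ c₂ : ℂ, v = ![c₁, c₂] :=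
      ⟨v 0, v 1, funext fun i ↦ by fin_cases i <;> rfl⟩
    obtain ⟨hc₁, hc₂⟩ := Matrix.mulVec_fin_two_eq_zero_iff.1 hMv
    obtain ⟨h₁a, h₁'a, h₂a, h₂'a⟩ := hinit
    refine ⟨_, _, h₁.linear_combination h₂ hab hp hq hr hs c₁ c₂,
      ⟨a, left_mem_Icc.2 hab, ?_⟩, ?_, ?_⟩
    · by_contra! h
      simp only [h₁a, h₁'a, h₂a, h₂'a, mul_zero, mul_one, add_zero, zero_add] at h
      exact hv (by simp [h])
    · simp only [h₁a, h₁'a, h₂a, h₂'a]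
      linear_combination hc₁
    · simp only [h₁a, h₁'a, h₂a, h₂'a]
      linear_combination hc₂

theorem exists_solution_coupled_iff_discriminant
    (h₁ : SLCSolution a b lam p q r s φ₁ φ₁') (h₂ : SLCSolution a b lam p q r s φ₂ φ₂')
    (hinit : φ₁ a = 1 ∧ φ₁' a = 0 ∧ φ₂ a = 0 ∧ φ₂' a = 1) (hab : a ≤ b)
    (hp : IntervalIntegrable (fun x ↦ 1 / p x) volume a b) (hq : IntervalIntegrable q volume a b)
    (hr : IntervalIntegrable r volume a b) (hs : IntervalIntegrable s volume a b)
    {k₁₁ k₁₂ k₂₁ k₂₂ : ℂ} (hdetK : k₁₁ * k₂₂ - k₁₂ * k₂₁ = 1)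
    {D : ℂ} (hD : D = k₂₂ * φ₁ b - k₁₂ * φ₁' b - k₂₁ * φ₂ b + k₁₁ * φ₂' b) (μ : ℂ) :
    (∃ y y1 : ℝ → ℂ, SLCSolution a b lam p q r s y y1 ∧
        (∃ x ∈ Icc a b, y x ≠ 0 ∨ y1 x ≠ 0) ∧
        y b = μ * (k₁₁ * y a + k₁₂ * y1 a) ∧ y1 b = μ * (k₂₁ * y a + k₂₂ * y1 a)) ↔
      μ * D = 1 + μ ^ 2 := by
  have hW := h₁.wronskian_eq h₂ hab hp hq hr hs (right_mem_Icc.2 hab)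
  rw [hinit.1, hinit.2.1, hinit.2.2.1, hinit.2.2.2] at hW
  rw [exists_solution_coupled_iff_det_eq_zero h₁ h₂ hinit hab hp hq hr hs, Matrix.det_fin_two_of]
  constructor <;> intro h
  · linear_combination -h + hW + μ ^ 2 * hdetK + μ * hD
  · linear_combination hW + μ ^ 2 * hdetK + μ * hD - h

end BoundaryValueProblem

theorem Complex.exp_mul_I_mul_eq_one_add_sq_iff (z D : ℂ) :
    exp (z * I) * D = 1 + exp (z * I) ^ 2 ↔ D = 2 * cos z := by
  have hinv : exp (z * I) * exp (-z * I) = 1 := by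
    rw [← exp_add]; simp
  have h : 1 + exp (z * I) ^ 2 = exp (z * I) * (2 * cos z) := by
    linear_combination -exp (z * I) * two_cos z - hinv
  rw [h, mul_right_inj' (exp_ne_zero _)]

theorem stmt18_general (a b : ℝ) (hab : a < b) (p q r s : ℝ → ℝ)
    (hp : IntegrableOn (fun x => 1 / p x) (Set.Ioo a b))
    (hq : IntegrableOn q (Set.Ioo a b))
    (hr : IntegrableOn r (Set.Ioo a b))
    (hs : IntegrableOn s (Set.Ioo a b))
    (lam : ℂ)
    (phi1 phi1q phi2 phi2q : ℝ → ℂ)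
    (h1 : SLCSolution a b lam p q r s phi1 phi1q)
    (h2 : SLCSolution a b lam p q r s phi2 phi2q)
    (hinit : phi1 a = 1 ∧ phi1q a = 0 ∧ phi2 a = 0 ∧ phi2q a = 1)
    (k11 k12 k21 k22 : ℝ) (hdetK : k11 * k22 - k12 * k21 = 1)
    (D : ℂ)
    (hD : D = (k22 : ℂ) * phi1 b - (k12 : ℂ) * phi1q b
      - (k21 : ℂ) * phi2 b + (k11 : ℂ) * phi2q b) :
    (∀ γ : ℝ, γ ∈ Set.Ioo (-Real.pi) 0 ∪ Set.Ioo 0 Real.pi →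
      ((∃ y y1 : ℝ → ℂ, SLCSolution a b lam p q r s y y1 ∧
          (∃ x ∈ Set.Icc a b, y x ≠ 0 ∨ y1 x ≠ 0) ∧
          y b = Complex.exp (γ * Complex.I) * ((k11 : ℂ) * y a + (k12 : ℂ) * y1 a) ∧
          y1 b = Complex.exp (γ * Complex.I) * ((k21 : ℂ) * y a + (k22 : ℂ) * y1 a)) ↔
        D = 2 * Real.cos γ)) ∧
    ((∃ y y1 : ℝ → ℂ, SLCSolution a b lam p q r s y y1 ∧
        (∃ x ∈ Set.Icc a b, y x ≠ 0 ∨ y1 x ≠ 0) ∧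
        y b = (k11 : ℂ) * y a + (k12 : ℂ) * y1 a ∧
        y1 b = (k21 : ℂ) * y a + (k22 : ℂ) * y1 a) ↔
      D = 2) := by
  have hab' := hab.le
  have key := exists_solution_coupled_iff_discriminant h1 h2 hinit hab'
    ((intervalIntegrable_iff_integrableOn_Ioo_of_le hab').2 hp)
    ((intervalIntegrable_iff_integrableOn_Ioo_of_le hab').2 hq)
    ((intervalIntegrable_iff_integrableOn_Ioo_of_le hab').2 hr)
    ((intervalIntegrable_iff_integrableOn_Ioo_of_le hab').2 hs)
    (by exact_mod_cast hdetK) hD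
  refine ⟨fun γ _ ↦ ?_, ?_⟩
  · rw [key, Complex.exp_mul_I_mul_eq_one_add_sq_iff, Complex.ofReal_cos]
  · simpa [one_add_one_eq_two] using key 1

/-- Characterization of the eigenvalues of the coupled self-adjoint boundary
conditions via the discriminant `D(λ) = trace (K⁻¹ Φ(b,λ))`, `K ∈ SL(2,ℝ)`:
`λ` is an eigenvalue of `Y(b) = e^{iγ} K Y(a)` (for `γ ∈ (−π,0) ∪ (0,π)`) iff
`D(λ) = 2 cos γ`, and `λ` is an eigenvalue of `Y(b) = K Y(a)` iff `D(λ) = 2`.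
Here `φ₁, φ₂` are the fundamental solutions with `φ₁(a) = φ₂¹(a) = 1`,
`φ₂(a) = φ₁¹(a) = 0`. -/
theorem stmt18 (a b : ℝ) (hab : a < b) (p q r s : ℝ → ℝ)
    (hp : IntegrableOn (fun x => 1 / p x) (Set.Ioo a b))
    (hq : IntegrableOn q (Set.Ioo a b))
    (hr : IntegrableOn r (Set.Ioo a b))
    (hs : IntegrableOn s (Set.Ioo a b))
    (hppos : ∀ᵐ x ∂(volume.restrict (Set.Ioo a b)), 0 < p x)
    (hrpos : ∀ᵐ x ∂(volume.restrict (Set.Ioo a b)), 0 < r x)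
    (lam : ℂ)
    (phi1 phi1q phi2 phi2q : ℝ → ℂ)
    (h1 : SLCSolution a b lam p q r s phi1 phi1q)
    (h2 : SLCSolution a b lam p q r s phi2 phi2q)
    (hinit : phi1 a = 1 ∧ phi1q a = 0 ∧ phi2 a = 0 ∧ phi2q a = 1)
    (k11 k12 k21 k22 : ℝ) (hdetK : k11 * k22 - k12 * k21 = 1)
    (D : ℂ)
    (hD : D = (k22 : ℂ) * phi1 b - (k12 : ℂ) * phi1q b
      - (k21 : ℂ) * phi2 b + (k11 : ℂ) * phi2q b) :
    (∀ γ : ℝ, γ ∈ Set.Ioo (-Real.pi) 0 ∪ Set.Ioo 0 Real.pi →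
      ((∃ y y1 : ℝ → ℂ, SLCSolution a b lam p q r s y y1 ∧
          (∃ x ∈ Set.Icc a b, y x ≠ 0 ∨ y1 x ≠ 0) ∧
          y b = Complex.exp (γ * Complex.I) * ((k11 : ℂ) * y a + (k12 : ℂ) * y1 a) ∧
          y1 b = Complex.exp (γ * Complex.I) * ((k21 : ℂ) * y a + (k22 : ℂ) * y1 a)) ↔
        D = 2 * Real.cos γ)) ∧
    ((∃ y y1 : ℝ → ℂ, SLCSolution a b lam p q r s y y1 ∧
        (∃ x ∈ Set.Icc a b, y x ≠ 0 ∨ y1 x ≠ 0) ∧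
        y b = (k11 : ℂ) * y a + (k12 : ℂ) * y1 a ∧
        y1 b = (k21 : ℂ) * y a + (k22 : ℂ) * y1 a) ↔
      D = 2) :=
  stmt18_general a b hab p q r s hp hq hr hs lam phi1 phi1q phi2 phi2q h1 h2 hinit k11 k12 k21 k22
    hdetK D hD
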